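/- Let $r, \lambda > 0$ and let $c: \mathbb{R}_+ \to \mathbb{R}_+$ be Lipschitz with $c(0) > 0$. Suppose $A > 0$ is such that $p(x) = A x^{-1} e^{-\lambda x + \frac{1}{r}\int_1^x \frac{c(y)}{y} dy}$ is a probability density on $(0,\infty)$. Then $p$ satisfies the stationary Liouville-type identity: for every $f \in C_c^1([0,\infty))$, $\int_0^\infty \left[-rxf'(x) + c(x)\int_0^\infty (f(x+y)-f(x))\lambda e^{-\lambda y} dy\right] p(x)\,dx = 0$. -/

import Mathlib

/-!
Write `J f x = ∫₀^∞ (f (x + y) - f x) λ e^{-λy} dy` for the jump part of the generator and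
`H x = r x p(x)` for the flux of the deterministic drift. The explicit form of `p` gives
`H' = (c - r λ x) p` on `(0, ∞)`, and `H(0⁺) = 0` because `c(0) > 0` forces
`∫₁^x c(y)/y dy → -∞`. Substituting `z = x + y` in `J f` gives `(J f)' = λ J f - f'`. Together,
`(𝒜 f) p = (H · J f)'` on `(0, ∞)`, and `H · J f` vanishes at `0⁺` and for large `x`.
-/

open MeasureTheory Real Set Filter Topology

theorem integral_Ioi_zero_comp_add {E : Type*} [NormedAddCommGroup E] [NormedSpace ℝ E]
    (g : ℝ → E) (x : ℝ) : ∫ y in Ioi 0, g (x + y) = ∫ z in Ioi x, g z := by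
  have h := (measurePreserving_add_left volume x).setIntegral_preimage_emb
    (measurableEmbedding_addLeft x) g (Ioi x)
  rw [← h]
  congr 1
  ext y
  simp

theorem hasDerivAt_integral_Ioi {E : Type*} [NormedAddCommGroup E] [NormedSpace ℝ E]
    [CompleteSpace E] {g : ℝ → E} {a x : ℝ} (hg : Continuous g)
    (hint : IntegrableOn g (Ioi a)) (hax : a < x) :
    HasDerivAt (fun u => ∫ z in Ioi u, g z) (-g x) x := by
  have hsplit : (fun u => (∫ z in u..x, g z) + ∫ z in Ioi x, g z) =ᶠ[𝓝 x]
      fun u => ∫ z in Ioi u, g z := by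
    filter_upwards [Ioi_mem_nhds hax] with u hu
    exact intervalIntegral.integral_interval_add_Ioi (hint.mono_set (Ioi_subset_Ioi hu.le))
      (hint.mono_set (Ioi_subset_Ioi hax.le))
  refine HasDerivAt.congr_of_eventuallyEq ?_ hsplit.symm
  exact (intervalIntegral.integral_hasDerivAt_left (hg.intervalIntegrable _ _)
    (hg.stronglyMeasurableAtFilter _ _) hg.continuousAt).add_const _

theorem integral_exponentialDensity_eq_one {lam : ℝ} (hlam : 0 < lam) :
    ∫ y in Ioi 0, lam * exp (-lam * y) = 1 := by
  rw [integral_const_mul, integral_exp_mul_Ioi (neg_neg_of_pos hlam)]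
  field_simp
  simp

theorem HasCompactSupport.eventuallyEq_zero_atTop {α β : Type*} [TopologicalSpace α]
    [LinearOrder α] [ClosedIciTopology α] [NoMaxOrder α] [T2Space α] [Zero β] {f : α → β}
    (hf : HasCompactSupport f) : f =ᶠ[atTop] 0 := by
  have := hasCompactSupport_iff_eventuallyEq.mp hf
  rw [coclosedCompact_eq_cocompact] at this
  exact this.filter_mono atTop_le_cocompact

theorem integrableOn_Ioi_mul_of_eventuallyEq_zero {g p : ℝ → ℝ} {a : ℝ} (hg : Continuous g)
    (hg0 : g =ᶠ[atTop] 0) (hp : IntegrableOn p (Ioi a)) :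
    IntegrableOn (fun x => g x * p x) (Ioi a) := by
  obtain ⟨M, hM⟩ := eventually_atTop.mp hg0
  refine IntegrableOn.mono_set (IntegrableOn.union ?_ ?_) (Ioi_subset_Ioc_union_Ioi (b := M))
  · exact IntegrableOn.continuousOn_mul_of_subset hg.continuousOn
      (hp.mono_set Ioc_subset_Ioi_self) isCompact_Icc measurableSet_Ioc Ioc_subset_Icc_self
  · refine integrableOn_zero.congr_fun (fun x hx => ?_) measurableSet_Ioi
    simp [hM x (mem_Ioi.mp hx).le]

section logIntegral

variable {c : ℝ → ℝ}

theorem intervalIntegrable_div_self (hc : Continuous c) {a b : ℝ} (ha : 0 < a) (hb : 0 < b) :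
    IntervalIntegrable (fun y => c y / y) volume a b :=
  (hc.continuousOn.div continuousOn_id fun _ hy =>
    (lt_of_lt_of_le (lt_min ha hb) hy.1).ne').intervalIntegrable

theorem hasDerivAt_integral_div_self (hc : Continuous c) {x : ℝ} (hx : 0 < x) :
    HasDerivAt (fun x => ∫ y in (1 : ℝ)..x, c y / y) (c x / x) x :=
  intervalIntegral.integral_hasDerivAt_right (intervalIntegrable_div_self hc one_pos hx)
    (ContinuousOn.stronglyMeasurableAtFilter isOpen_Ioi
      (hc.continuousOn.div continuousOn_id fun _ hy => (mem_Ioi.mp hy).ne') x hx)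
    (hc.continuousAt.div continuousAt_id hx.ne')

-- near `0`, `c y / y ≥ (c 0 / 2) / y`, whose integral diverges logarithmically
theorem tendsto_integral_div_self_atBot (hc : Continuous c) (hc0 : 0 < c 0) :
    Tendsto (fun x => ∫ y in (1 : ℝ)..x, c y / y) (𝓝[>] 0) atBot := by
  obtain ⟨ε, hε, hεc⟩ := mem_nhdsGT_iff_exists_Ioc_subset.mp
    (nhdsWithin_le_nhds ((hc.tendsto 0).eventually (lt_mem_nhds (half_lt_self hc0))))
  have hε : 0 < ε := hε
  have hbound : ∀ x ∈ Ioc 0 ε, ∫ y in (1 : ℝ)..x, c y / y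
      ≤ (∫ y in (1 : ℝ)..ε, c y / y) - c 0 / 2 * (log ε - log x) := by
    rintro x ⟨hx, hxε⟩
    have hmono : ∫ y in x..ε, c 0 / 2 * y⁻¹ ≤ ∫ y in x..ε, c y / y :=
      intervalIntegral.integral_mono_on hxε
        ((continuousOn_const.mul (continuousOn_inv₀.mono fun _ hy =>
          (lt_of_lt_of_le (lt_min hx hε) hy.1).ne')).intervalIntegrable)
        (intervalIntegrable_div_self hc hx hε) fun y hy =>
          div_eq_mul_inv (c y) y ▸ mul_le_mul_of_nonneg_right
            (hεc ⟨lt_of_lt_of_le hx hy.1, hy.2⟩).le (inv_nonneg.mpr (hx.trans_le hy.1).le)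
    rw [intervalIntegral.integral_const_mul, integral_inv_of_pos hx hε,
      log_div hε.ne' hx.ne'] at hmono
    rw [← intervalIntegral.integral_add_adjacent_intervals
      (intervalIntegrable_div_self hc one_pos hx) (intervalIntegrable_div_self hc hx hε)]
    linarith
  refine tendsto_atBot_mono' _ ?_
    (tendsto_atBot_add_const_left _ ((∫ y in (1 : ℝ)..ε, c y / y) - c 0 / 2 * log ε)
      (tendsto_log_nhdsGT_zero.const_mul_atBot (half_pos hc0)))
  filter_upwards [Ioc_mem_nhdsGT hε] with x hx
  linarith [hbound x hx]

end logIntegral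

namespace AutoregulatedGene

noncomputable def jumpTerm (lam : ℝ) (f : ℝ → ℝ) (x : ℝ) : ℝ :=
  ∫ y in Ioi 0, (f (x + y) - f x) * (lam * exp (-lam * y))

section jumpTerm

variable {lam : ℝ} {f : ℝ → ℝ}

theorem jumpTerm_eq (hlam : 0 < lam) (hf : Continuous f) (hfb : ∃ C, ∀ x, ‖f x‖ ≤ C) (x : ℝ) :
    jumpTerm lam f x = lam * exp (lam * x) * (∫ z in Ioi x, f z * exp (-lam * z)) - f x := by
  obtain ⟨C, hC⟩ := hfb
  have hshift : ∀ y, f (x + y) * (lam * exp (-lam * y))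
      = lam * exp (lam * x) * (f (x + y) * exp (-lam * (x + y))) := by
    intro y
    rw [show -lam * y = lam * x + -lam * (x + y) by ring, exp_add]
    ring
  have hint : IntegrableOn (fun y => f (x + y) * (lam * exp (-lam * y))) (Ioi 0) :=
    ((integrableOn_exp_mul_Ioi (neg_neg_of_pos hlam) 0).const_mul lam).bdd_mul
      (hf.comp (continuous_const_add x)).aestronglyMeasurable (ae_of_all _ fun y => hC (x + y))
  simp only [jumpTerm, sub_mul]
  rw [integral_sub hint
      (((integrableOn_exp_mul_Ioi (neg_neg_of_pos hlam) 0).const_mul lam).const_mul (f x)),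
    integral_const_mul (f x), integral_exponentialDensity_eq_one hlam, mul_one]
  simp only [hshift]
  rw [integral_const_mul, integral_Ioi_zero_comp_add (fun z => f z * exp (-lam * z))]

theorem hasDerivAt_jumpTerm (hlam : 0 < lam) (hf : Continuous f) (hfb : ∃ C, ∀ x, ‖f x‖ ≤ C)
    {f' x : ℝ} (hdf : HasDerivAt f f' x) :
    HasDerivAt (jumpTerm lam f) (lam * jumpTerm lam f x - f') x := by
  have hint : IntegrableOn (fun z => f z * exp (-lam * z)) (Ioi (x - 1)) := by
    obtain ⟨C, hC⟩ := hfb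
    exact (integrableOn_exp_mul_Ioi (neg_neg_of_pos hlam) (x - 1)).bdd_mul
      hf.aestronglyMeasurable (ae_of_all _ hC)
  have htail : HasDerivAt (fun u => ∫ z in Ioi u, f z * exp (-lam * z))
      (-(f x * exp (-lam * x))) x :=
    hasDerivAt_integral_Ioi (hf.mul (continuous_exp.comp (continuous_const_mul _))) hint
      (sub_one_lt x)
  have hexp : HasDerivAt (fun u => lam * exp (lam * u)) (lam * (exp (lam * x) * lam)) x := by
    simpa using (((hasDerivAt_id x).const_mul lam).exp).const_mul lam
  rw [funext (jumpTerm_eq hlam hf hfb)]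
  refine ((hexp.mul htail).sub hdf).congr_deriv ?_
  rw [show -lam * x = -(lam * x) by ring, exp_neg]
  field_simp
  ring

theorem jumpTerm_eventuallyEq_zero (hf : f =ᶠ[atTop] 0) :
    jumpTerm lam f =ᶠ[atTop] 0 := by
  obtain ⟨M, hM⟩ := eventually_atTop.mp hf
  filter_upwards [Ici_mem_atTop M] with x hx
  refine setIntegral_eq_zero_of_forall_eq_zero fun y hy => ?_
  rw [hM x hx, hM (x + y) (by linarith [mem_Ioi.mp hy, mem_Ici.mp hx])]
  simp

end jumpTerm

noncomputable def generator (r lam : ℝ) (c f : ℝ → ℝ) (x : ℝ) : ℝ :=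
  -r * x * deriv f x + c x * jumpTerm lam f x

theorem integral_generator_mul_eq_zero {r lam : ℝ} {c p f : ℝ → ℝ} (hlam : 0 < lam)
    (hc : Continuous c) (hp : IntegrableOn p (Ioi 0))
    (hflux : ∀ x > 0, HasDerivAt (fun x => r * x * p x) ((c x - r * lam * x) * p x) x)
    (hflux0 : Tendsto (fun x => r * x * p x) (𝓝[>] 0) (𝓝 0))
    (hf : ContDiff ℝ 1 f) (hfs : HasCompactSupport f) :
    ∫ x in Ioi 0, generator r lam c f x * p x = 0 := by
  have hfb := hfs.exists_bound_of_continuous hf.continuous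
  have hJ : ∀ x, HasDerivAt (jumpTerm lam f) (lam * jumpTerm lam f x - deriv f x) x := fun x =>
    hasDerivAt_jumpTerm hlam hf.continuous hfb
      ((hf.differentiable one_ne_zero x).hasDerivAt)
  have hJc : Continuous (jumpTerm lam f) :=
    continuous_iff_continuousAt.mpr fun x => (hJ x).continuousAt
  have hgen : Continuous (generator r lam c f) :=
    (continuous_const.mul continuous_id).mul (hf.continuous_deriv le_rfl) |>.add (hc.mul hJc)
  have hgen0 : generator r lam c f =ᶠ[atTop] 0 := by
    filter_upwards [hfs.deriv.eventuallyEq_zero_atTop,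
      jumpTerm_eventuallyEq_zero (lam := lam) hfs.eventuallyEq_zero_atTop] with x hdf hJx
    simp [generator, hdf, hJx]
  have hderiv : ∀ x ∈ Ioi (0 : ℝ), HasDerivAt (fun x => r * x * p x * jumpTerm lam f x)
      (generator r lam c f x * p x) x := fun x hx =>
    ((hflux x hx).mul (hJ x)).congr_deriv (by simp only [generator]; ring)
  have hcont : ContinuousWithinAt (fun x => r * x * p x * jumpTerm lam f x) (Ici 0) 0 := by
    refine continuousWithinAt_Ioi_iff_Ici.mp ?_
    simpa [ContinuousWithinAt] using hflux0.mul hJc.continuousAt.continuousWithinAt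
  have htop : Tendsto (fun x => r * x * p x * jumpTerm lam f x) atTop (𝓝 0) :=
    tendsto_const_nhds.congr' <|
      (jumpTerm_eventuallyEq_zero (lam := lam) hfs.eventuallyEq_zero_atTop).mono
      fun x hx => by simp [hx]
  rw [integral_Ioi_of_hasDerivAt_of_tendsto hcont hderiv
    (integrableOn_Ioi_mul_of_eventuallyEq_zero hgen hgen0 hp) htop]
  simp

section density

variable {r lam A : ℝ} {c p : ℝ → ℝ}

theorem flux_eq (hp : ∀ x > 0, p x = A * x⁻¹ *
      exp (-lam * x + (1 / r) * ∫ y in (1 : ℝ)..x, c y / y)) {x : ℝ} (hx : 0 < x) :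
    r * x * p x = r * A * exp (-lam * x + (1 / r) * ∫ y in (1 : ℝ)..x, c y / y) := by
  rw [hp x hx]
  field_simp

theorem hasDerivAt_flux (hr : r ≠ 0) (hc : Continuous c) (hp : ∀ x > 0, p x = A * x⁻¹ *
      exp (-lam * x + (1 / r) * ∫ y in (1 : ℝ)..x, c y / y)) {x : ℝ} (hx : 0 < x) :
    HasDerivAt (fun x => r * x * p x) ((c x - r * lam * x) * p x) x := by
  have hexponent : HasDerivAt (fun u => -lam * u + (1 / r) * ∫ y in (1 : ℝ)..u, c y / y)
      (-lam + 1 / r * (c x / x)) x :=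
    (((hasDerivAt_id x).const_mul (-lam)).add
      ((hasDerivAt_integral_div_self hc hx).const_mul (1 / r))).congr_deriv (by ring)
  refine ((hexponent.exp.const_mul (r * A)).congr_deriv ?_).congr_of_eventuallyEq ?_
  · rw [hp x hx]
    field_simp
    ring
  · filter_upwards [Ioi_mem_nhds hx] with u hu
    exact flux_eq hp hu

theorem tendsto_flux_nhdsGT_zero (hr : 0 < r) (hc : Continuous c) (hc0 : 0 < c 0)
    (hp : ∀ x > 0, p x = A * x⁻¹ *
      exp (-lam * x + (1 / r) * ∫ y in (1 : ℝ)..x, c y / y)) :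
    Tendsto (fun x => r * x * p x) (𝓝[>] 0) (𝓝 0) := by
  have hexponent : Tendsto (fun x => -lam * x + (1 / r) * ∫ y in (1 : ℝ)..x, c y / y)
      (𝓝[>] 0) atBot :=
    Tendsto.add_atBot (((continuous_const_mul (-lam)).tendsto' 0 0 (mul_zero _)).mono_left
      nhdsWithin_le_nhds)
      ((tendsto_integral_div_self_atBot hc hc0).const_mul_atBot (one_div_pos.mpr hr))
  have := (tendsto_exp_atBot.comp hexponent).const_mul (r * A)
  rw [mul_zero] at this
  refine this.congr' ?_
  filter_upwards [self_mem_nhdsWithin] with x hx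
  exact (flux_eq hp hx).symm

end density

end AutoregulatedGene

open AutoregulatedGene

theorem stationary_density_autoregulated_general (r lam : ℝ) (hr : 0 < r)
    (hlam : 0 < lam) (c : ℝ → ℝ)
    (Lc : ℝ) (hLip : ∀ x y, |c x - c y| ≤ Lc * |x - y|)
    (hc0 : 0 < c 0) (A : ℝ)
    (p : ℝ → ℝ)
    (hp : ∀ x > 0, p x = A * x⁻¹ *
      exp (-lam * x + (1 / r) * ∫ y in (1:ℝ)..x, c y / y))
    (hnorm : (∫ x in Set.Ioi (0:ℝ), p x) = 1) :
    ∀ f : ℝ → ℝ, ContDiff ℝ 1 f → HasCompactSupport f →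
      (∫ x in Set.Ioi (0:ℝ),
        (-r * x * deriv f x
          + c x * ∫ y in Set.Ioi (0:ℝ), (f (x + y) - f x) * (lam * exp (-lam * y)))
        * p x) = 0 := by
  intro f hf hfs
  have hc : Continuous c := (LipschitzWith.of_dist_le' hLip).continuous
  have hpint : IntegrableOn p (Ioi 0) := Integrable.of_integral_ne_zero (hnorm ▸ one_ne_zero)
  exact integral_generator_mul_eq_zero hlam hc hpint
    (fun _ hx => hasDerivAt_flux hr.ne' hc hp hx) (tendsto_flux_nhdsGT_zero hr hc hc0 hp) hf hfs

/-- The density `p(x) = A x⁻¹ exp(-λx + (1/r)∫₁^x c(y)/y dy)` is stationary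
for the PDMP generator of autoregulated gene expression:
`∫ A f dπ = 0` for all `f ∈ C_c¹([0,∞))`. -/
theorem stationary_density_autoregulated (r lam : ℝ) (hr : 0 < r)
    (hlam : 0 < lam) (c : ℝ → ℝ) (hcnn : ∀ x, 0 ≤ c x)
    (Lc : ℝ) (hLip : ∀ x y, |c x - c y| ≤ Lc * |x - y|)
    (hc0 : 0 < c 0) (A : ℝ) (hA : 0 < A)
    (p : ℝ → ℝ)
    (hp : ∀ x > 0, p x = A * x⁻¹ *
      exp (-lam * x + (1 / r) * ∫ y in (1:ℝ)..x, c y / y))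
    (hnorm : (∫ x in Set.Ioi (0:ℝ), p x) = 1) :
    ∀ f : ℝ → ℝ, ContDiff ℝ 1 f → HasCompactSupport f →
      (∫ x in Set.Ioi (0:ℝ),
        (-r * x * deriv f x
          + c x * ∫ y in Set.Ioi (0:ℝ), (f (x + y) - f x) * (lam * exp (-lam * y)))
        * p x) = 0 :=
  stationary_density_autoregulated_general r lam hr hlam c Lc hLip hc0 A p hp hnorm
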